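/- Define the real function b on [0,∞) by b(x) = 0 for 0 ≤ x ≤ e^{−3} and b(x) = x·log(x²) + 3x + 4e^{−3} − e^{−6}/x for x ≥ e^{−3}; extend it to the complex plane by B(z) = (z/|z|)·b(|z|) for z ≠ 0 and B(0) = 0. For each positive integer n define b_n : ℂ → ℂ by b_n(z) = B(z) if |z| ≤ n and b_n(z) = (z/n)·b(n) if |z| ≥ n. Then there exists a constant C > 0, independent of n, such that for all positive integers n and all complex numbers u and v, |Im[(b_n(u) − b_n(v))·conj(u − v)]| ≤ C·|u − v|². -/

import Mathlib

/-!
Write `a = e⁻³` and `f(x) = 2 log x + 4a/x - a²/x²` (`logCore a`), so that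
`f'(x) = 2(x - a)²/x³ ≥ 0`. Then `b(x) = x h(x)` with `h(x) = f(max x a) - f(a)` (`bProfile a`),
hence `b_n(z) = z h(min |z| n)`. For `z ↦ z g(|z|)` with `g` nondecreasing and `|v| ≤ |u|`,
`Im[(u g(|u|) - v g(|v|)) conj(u - v)] = (g(|v|) - g(|u|)) Im(u conj v)` and
`|Im(u conj v)| ≤ |u - v| |v|`, so the estimate holds with `C = K` as soon as
`(g(r) - g(s)) s ≤ K (r - s)` for `0 ≤ s ≤ r`. For `f` on `[a, ∞)` this holds with `K = 2`
by `log(r/s) ≤ r/s - 1`, and it survives the clamps `max · a` and `min · n`, which are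
monotone and `1`-Lipschitz.
-/

open Real Set ComplexConjugate

noncomputable def logCore (a x : ℝ) : ℝ := 2 * log x + 4 * a / x - a ^ 2 / x ^ 2

noncomputable def bProfile (a x : ℝ) : ℝ := logCore a (max x a) - logCore a a

structure IsAdmissibleProfile (K : ℝ) (g : ℝ → ℝ) : Prop where
  monotoneOn : MonotoneOn g (Ici 0)
  sub_mul_le : ∀ ⦃s r : ℝ⦄, 0 ≤ s → s ≤ r → (g r - g s) * s ≤ K * (r - s)

lemma im_mul_ofReal_sub_mul_ofReal_mul_conj (u v : ℂ) (p q : ℝ) :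
    ((u * p - v * q) * conj (u - v)).im = (q - p) * (u * conj v).im := by
  simp only [Complex.mul_im, Complex.mul_re, Complex.sub_re, Complex.sub_im, Complex.conj_re,
    Complex.conj_im, Complex.ofReal_re, Complex.ofReal_im]
  ring

lemma abs_im_mul_conj_le (u v : ℂ) : |(u * conj v).im| ≤ ‖u - v‖ * ‖v‖ := by
  have h : (u * conj v).im = ((u - v) * conj v).im := by
    rw [sub_mul, Complex.sub_im, Complex.mul_conj, Complex.ofReal_im, sub_zero]
  calc |(u * conj v).im| = |((u - v) * conj v).im| := by rw [h]
    _ ≤ ‖(u - v) * conj v‖ := Complex.abs_im_le_norm _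
    _ = ‖u - v‖ * ‖v‖ := by rw [norm_mul, Complex.norm_conj]

lemma div_ofReal_mul_ofReal_mul (z : ℂ) {c : ℝ} (hc : c ≠ 0) (H : ℝ) :
    z / c * ((c * H : ℝ) : ℂ) = z * H := by
  have hc' : (c : ℂ) ≠ 0 := Complex.ofReal_ne_zero.2 hc
  push_cast
  field_simp

namespace IsAdmissibleProfile

variable {K : ℝ} {g : ℝ → ℝ}

theorem abs_im_sub_mul_conj_le (hg : IsAdmissibleProfile K g) (hK : 0 ≤ K) (u v : ℂ) :
    |((u * g ‖u‖ - v * g ‖v‖) * conj (u - v)).im| ≤ K * ‖u - v‖ ^ 2 := by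
  wlog huv : ‖v‖ ≤ ‖u‖ generalizing u v
  · have hswap : (u * g ‖u‖ - v * g ‖v‖) * conj (u - v)
        = (v * g ‖v‖ - u * g ‖u‖) * conj (v - u) := by
      rw [map_sub, map_sub]
      ring
    rw [hswap, norm_sub_rev]
    exact this v u (le_of_not_ge huv)
  have hgap : 0 ≤ g ‖u‖ - g ‖v‖ :=
    sub_nonneg.2 (hg.monotoneOn (norm_nonneg v) (norm_nonneg u) huv)
  rw [im_mul_ofReal_sub_mul_ofReal_mul_conj, abs_mul, abs_sub_comm, abs_of_nonneg hgap]
  calc (g ‖u‖ - g ‖v‖) * |(u * conj v).im|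
      ≤ (g ‖u‖ - g ‖v‖) * (‖u - v‖ * ‖v‖) :=
        mul_le_mul_of_nonneg_left (abs_im_mul_conj_le u v) hgap
    _ = (g ‖u‖ - g ‖v‖) * ‖v‖ * ‖u - v‖ := by ring
    _ ≤ K * (‖u‖ - ‖v‖) * ‖u - v‖ :=
        mul_le_mul_of_nonneg_right (hg.sub_mul_le (norm_nonneg v) huv) (norm_nonneg _)
    _ ≤ K * ‖u - v‖ * ‖u - v‖ := by gcongr; exact norm_sub_norm_le u v
    _ = K * ‖u - v‖ ^ 2 := by ring

theorem comp_min (hg : IsAdmissibleProfile K g) (hK : 0 ≤ K) {c : ℝ} (hc : 0 ≤ c) :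
    IsAdmissibleProfile K (fun x => g (min x c)) where
  monotoneOn _ hx _ hy hxy :=
    hg.monotoneOn (le_min hx hc) (le_min hy hc) (min_le_min_right c hxy)
  sub_mul_le s r hs hsr := by
    rcases le_or_gt c s with hcs | hsc
    · rw [min_eq_right hcs, min_eq_right (hcs.trans hsr), sub_self, zero_mul]
      exact mul_nonneg hK (sub_nonneg.2 hsr)
    · have hsr' : s ≤ min r c := le_min hsr hsc.le
      calc (g (min r c) - g (min s c)) * s = (g (min r c) - g s) * s := by
            rw [min_eq_left hsc.le]
        _ ≤ K * (min r c - s) := hg.sub_mul_le hs hsr'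
        _ ≤ K * (r - s) := by gcongr; exact min_le_left r c

end IsAdmissibleProfile

section LogCore

variable {a : ℝ}

lemma hasDerivAt_logCore {x : ℝ} (hx : 0 < x) :
    HasDerivAt (logCore a) (2 * (x - a) ^ 2 / x ^ 3) x := by
  have h : HasDerivAt (fun y => 2 * log y + 4 * a * y⁻¹ - a ^ 2 * (y ^ 2)⁻¹) _ x :=
    (((hasDerivAt_log hx.ne').const_mul 2).add ((hasDerivAt_inv hx.ne').const_mul (4 * a))).sub
      (((hasDerivAt_pow 2 x).inv (by positivity)).const_mul (a ^ 2))
  convert h using 1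
  · funext y
    simp only [logCore, div_eq_mul_inv]
  · field_simp
    ring

lemma monotoneOn_logCore (ha : 0 < a) : MonotoneOn (logCore a) (Ici a) := by
  have hpos : ∀ x ∈ interior (Ici a), 0 < x := fun x hx =>
    ha.trans (by rwa [interior_Ici] at hx)
  refine monotoneOn_of_hasDerivWithinAt_nonneg (convex_Ici a) ?_
    (fun x hx => (hasDerivAt_logCore (hpos x hx)).hasDerivWithinAt)
    (fun x hx => by have := hpos x hx; positivity)
  exact fun x hx => (hasDerivAt_logCore (ha.trans_le hx)).continuousAt.continuousWithinAt

lemma logCore_sub_mul_le (ha : 0 < a) {s r : ℝ} (hs : a ≤ s) (hsr : s ≤ r) :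
    (logCore a r - logCore a s) * s ≤ 2 * (r - s) := by
  have hs0 : 0 < s := ha.trans_le hs
  have hr0 : 0 < r := hs0.trans_le hsr
  have hlog : log r - log s ≤ r / s - 1 := by
    rw [← log_div hr0.ne' hs0.ne']
    exact log_le_sub_one_of_pos (div_pos hr0 hs0)
  have hsplit : (logCore a r - logCore a s) * s =
      2 * (log r - log s) * s + a * (r - s) * (a * (r + s) - 4 * r * s) / (r ^ 2 * s) := by
    unfold logCore
    field_simp
    ring
  have hlog_term : 2 * (log r - log s) * s ≤ 2 * (r - s) := by
    have h := mul_le_mul_of_nonneg_right hlog hs0.le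
    rw [sub_one_mul, div_mul_cancel₀ r hs0.ne'] at h
    linarith
  have hrest : a * (r - s) * (a * (r + s) - 4 * r * s) / (r ^ 2 * s) ≤ 0 := by
    refine div_nonpos_of_nonpos_of_nonneg
      (mul_nonpos_of_nonneg_of_nonpos (mul_nonneg ha.le (sub_nonneg.2 hsr)) ?_) (by positivity)
    nlinarith [mul_le_mul_of_nonneg_right hs hr0.le,
      mul_le_mul_of_nonneg_right (hs.trans hsr) hs0.le]
  linarith

lemma bProfile_of_le {x : ℝ} (hx : x ≤ a) : bProfile a x = 0 := by
  rw [bProfile, max_eq_right hx, sub_self]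

theorem isAdmissibleProfile_bProfile (ha : 0 < a) : IsAdmissibleProfile 2 (bProfile a) where
  monotoneOn x _ y _ hxy :=
    sub_le_sub_right (monotoneOn_logCore ha (le_max_right x a) (le_max_right y a)
      (max_le_max_right a hxy)) _
  sub_mul_le s r _ hsr := by
    have hgap : 0 ≤ logCore a (max r a) - logCore a (max s a) := sub_nonneg.2 <|
      monotoneOn_logCore ha (le_max_right s a) (le_max_right r a) (max_le_max_right a hsr)
    rw [bProfile, bProfile, sub_sub_sub_cancel_right]
    calc (logCore a (max r a) - logCore a (max s a)) * s
        ≤ (logCore a (max r a) - logCore a (max s a)) * max s a :=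
          mul_le_mul_of_nonneg_left (le_max_left s a) hgap
      _ ≤ 2 * (max r a - max s a) :=
          logCore_sub_mul_le ha (le_max_right s a) (max_le_max_right a hsr)
      _ ≤ 2 * (r - s) := mul_le_mul_of_nonneg_left ((le_abs_self _).trans
          ((abs_max_sub_max_le_abs r s a).trans_eq (abs_of_nonneg (sub_nonneg.2 hsr)))) two_pos.le

lemma mul_bProfile_exp_neg_three {x : ℝ} (hx : exp (-3) ≤ x) :
    x * bProfile (exp (-3)) x
      = x * log (x ^ 2) + 3 * x + 4 * exp (-3) - exp (-6) / x := by
  have hx0 : x ≠ 0 := ((exp_pos _).trans_le hx).ne'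
  have hexp : exp (-6) = exp (-3) ^ 2 := by rw [← exp_nat_mul]; norm_num
  rw [bProfile, max_eq_left hx, logCore, logCore, log_exp, log_pow, hexp]
  field_simp
  push_cast
  ring

end LogCore

theorem truncated_b_monotone_estimate (b : ℝ → ℝ)
    (hb1 : ∀ x : ℝ, 0 ≤ x → x ≤ Real.exp (-3) → b x = 0)
    (hb2 : ∀ x : ℝ, Real.exp (-3) ≤ x →
      b x = x * Real.log (x ^ 2) + 3 * x + 4 * Real.exp (-3) - Real.exp (-6) / x)
    (B : ℂ → ℂ) (hB0 : B 0 = 0)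
    (hB : ∀ z : ℂ, z ≠ 0 → B z = (z / (‖z‖ : ℂ)) * (b (‖z‖) : ℂ))
    (bn : ℕ → ℂ → ℂ)
    (hbn1 : ∀ (n : ℕ) (z : ℂ), ‖z‖ ≤ (n : ℝ) → bn n z = B z)
    (hbn2 : ∀ (n : ℕ) (z : ℂ), (n : ℝ) ≤ ‖z‖ →
      bn n z = (z / (n : ℂ)) * (b (n : ℝ) : ℂ)) :
    ∃ C : ℝ, 0 < C ∧ ∀ (n : ℕ), 0 < n → ∀ u v : ℂ,
      |((bn n u - bn n v) * (starRingEnd ℂ) (u - v)).im| ≤ C * ‖u - v‖ ^ 2 := by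
  have hb : ∀ ρ, 0 < ρ → b ρ = ρ * bProfile (exp (-3)) ρ := fun ρ hρ => by
    rcases le_total ρ (exp (-3)) with h | h
    · rw [hb1 ρ hρ.le h, bProfile_of_le h, mul_zero]
    · rw [hb2 ρ h, mul_bProfile_exp_neg_three h]
  refine ⟨2, two_pos, fun n hn u v => ?_⟩
  have hn0 : (0 : ℝ) < n := Nat.cast_pos.2 hn
  have hrep : ∀ z, bn n z = z * bProfile (exp (-3)) (min ‖z‖ n) := fun z => by
    rcases le_total ‖z‖ n with h | h
    · rw [hbn1 n z h, min_eq_left h]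
      rcases eq_or_ne z 0 with rfl | hz
      · simp [hB0]
      · rw [hB z hz, hb _ (norm_pos_iff.2 hz), div_ofReal_mul_ofReal_mul z (norm_ne_zero_iff.2 hz)]
    · rw [hbn2 n z h, min_eq_right h, ← Complex.ofReal_natCast, hb _ hn0,
        div_ofReal_mul_ofReal_mul z hn0.ne']
  rw [hrep, hrep]
  exact ((isAdmissibleProfile_bProfile (exp_pos _)).comp_min zero_le_two hn0.le)
    |>.abs_im_sub_mul_conj_le zero_le_two u v
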